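/- arXiv:2506.14304 — 9 statements merged into one kernel-verified Lean document; each statement's English description precedes it below -/
import Mathlib

section
/- Let d ≥ 1 and let F be a measurable subset of E := EuclideanSpace ℝ (Fin d) such that 0 < volume F < ∞ and the identity function x ↦ x is integrable on F with respect to the restricted Lebesgue measure. Define the center of gravity z(F) := ((volume F).toReal)⁻¹ • ∫ x in F, x. Then every isometric bijection e : E ≃ᵢ E with e '' F = F satisfies e (z F) = z F. (This is the content of the paper's Proposition 5.2: the symmetry group G(F) is contained in the conjugate by translation-by-z(F) of the stabilizer of the origin.) -/
open MeasureTheory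

/-- The center of gravity of a figure `A` in Euclidean space. -/
noncomputable def centerOfGravity {d : ℕ} (A : Set (EuclideanSpace ℝ (Fin d))) :
    EuclideanSpace ℝ (Fin d) :=
  ((volume A).toReal)⁻¹ • ∫ x in A, x

/-- Proposition 5.2: every isometric symmetry of a figure `F` of finite positive volume
fixes its center of gravity. -/
theorem center_of_gravity_fixed_by_symmetry (d : ℕ) (hd : 1 ≤ d)
    (F : Set (EuclideanSpace ℝ (Fin d)))
    (hFmeas : MeasurableSet F)
    (hpos : 0 < volume F) (hfin : volume F < ⊤)
    (hint : IntegrableOn (fun x => x) F)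
    (e : EuclideanSpace ℝ (Fin d) ≃ᵢ EuclideanSpace ℝ (Fin d))
    (he : e '' F = F) :
    e (centerOfGravity F) = centerOfGravity F := by
  set g := e.toRealAffineIsometryEquiv.linearIsometryEquiv with hg
  set c := e 0 with hc
  have hdecomp : ∀ x, e x = g x + c := by
    intro x
    have h1 : e.toRealAffineIsometryEquiv (x +ᵥ (0 : EuclideanSpace ℝ (Fin d)))
        = g x +ᵥ e.toRealAffineIsometryEquiv 0 :=
      e.toRealAffineIsometryEquiv.map_vadd 0 x
    simpa [e.coeFn_toRealAffineIsometryEquiv] using h1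
  have hgmp : MeasurePreserving g volume volume := g.measurePreserving
  have htrans : MeasurePreserving (fun x : EuclideanSpace ℝ (Fin d) => x + c) volume volume :=
    measurePreserving_add_right volume c
  have hemp : MeasurePreserving e volume volume := by
    have h2 := htrans.comp hgmp
    have hcomp : ((fun x : EuclideanSpace ℝ (Fin d) => x + c) ∘ g) = ⇑e := by
      funext x; simp [Function.comp, (hdecomp x).symm]
    rwa [hcomp] at h2
  have hemb : MeasurableEmbedding e := e.toHomeomorph.measurableEmbedding
  have hchange : ∫ x in F, x = ∫ x in F, e x := by
    calc ∫ x in F, x = ∫ x in e '' F, x := by rw [he]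
    _ = ∫ x in F, e x := hemp.setIntegral_image_emb hemb _ _
  set v := (volume F).toReal with hv
  have hv0 : v ≠ 0 := (ENNReal.toReal_pos hpos.ne' hfin.ne).ne'
  have hintg : IntegrableOn (fun x => g x) F :=
    g.toContinuousLinearEquiv.toContinuousLinearMap.integrable_comp hint
  have hI2 : (∫ x in F, x) = g (∫ x in F, x) + v • c := by
    conv_lhs => rw [hchange]
    have h3 : ∫ x in F, e x = ∫ x in F, (g x + c) := by
      congr 1; funext x; exact hdecomp x
    rw [h3, integral_add hintg (integrableOn_const hfin.ne)]
    congr 1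
    · exact g.toLinearIsometry.integral_comp_comm _
    · rw [setIntegral_const]; rfl
  rw [hdecomp, centerOfGravity, g.map_smul]
  have h5 : g (∫ x in F, x) = (∫ x in F, x) - v • c := eq_sub_of_add_eq hI2.symm
  rw [h5, smul_sub, smul_smul, inv_mul_cancel₀ hv0, one_smul]
  abel
end

section
/- Let G be a group acting on a set X₀ and let X ⊆ X₀ be nonempty. Define G(X) := { g : G | g • X = X } and 𝒫(X)₁ := { g : G | ∃ x ∈ X, g • x ∈ X }. Then 𝒫(X)₁ = G(X) holds if and only if both of the following conditions hold: (i) for all x, y ∈ X, if there exists g ∈ G with g • x = y, then there exists h ∈ G with h • X = X and h • x = y; and (ii) for every x ∈ X and every g ∈ G with g • x = x, one has g • X = X. (This is the paper's Proposition 4.3(3).) -/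
open Pointwise

/-- Proposition 4.3(3): `𝒫(X)₁ = G(X)` if and only if (i) any two points of `X` in the
same `G`-orbit are in the same `G(X)`-orbit, and (ii) the stabilizer in `G` of any point
of `X` is contained in `G(X)`. -/
theorem parade_eq_symmetry_iff {G X₀ : Type*} [Group G] [MulAction G X₀]
    (X : Set X₀) (hX : X.Nonempty) :
    {g : G | ∃ x ∈ X, g • x ∈ X} = {g : G | g • X = X} ↔
      ((∀ x ∈ X, ∀ y ∈ X, (∃ g : G, g • x = y) →
          ∃ h : G, h • X = X ∧ h • x = y) ∧
        (∀ x ∈ X, ∀ g : G, g • x = x → g • X = X)) := by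
  constructor
  · intro h
    constructor
    · intro x hx y hy ⟨g, hg⟩
      refine ⟨g, ?_, hg⟩
      have : g ∈ {g : G | ∃ x ∈ X, g • x ∈ X} := ⟨x, hx, hg ▸ hy⟩
      rwa [h] at this
    · intro x hx g hg
      have : g ∈ {g : G | ∃ x ∈ X, g • x ∈ X} := ⟨x, hx, by rw [hg]; exact hx⟩
      rwa [h] at this
  · rintro ⟨h1, h2⟩
    ext g
    simp only [Set.mem_setOf_eq]
    constructor
    · rintro ⟨x, hx, hgx⟩
      obtain ⟨k, hkX, hkx⟩ := h1 x hx (g • x) hgx ⟨g, rfl⟩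
      have hst : (k⁻¹ * g) • x = x := by
        rw [mul_smul, ← hkx, inv_smul_smul]
      have := h2 x hx _ hst
      calc g • X = k • (k⁻¹ * g) • X := by rw [← mul_smul, mul_inv_cancel_left]
        _ = k • X := by rw [this]
        _ = X := hkX
    · intro hg
      obtain ⟨x, hx⟩ := hX
      exact ⟨x, hx, hg ▸ Set.smul_mem_smul_set hx⟩
end

section
/- Let G be a group acting on a set X₀ and let X ⊆ X₀. Call a tuple (g₁, …, gₙ) ∈ Gⁿ a parade in X if there exists x ∈ X such that, setting x₀ := x and xᵢ := gᵢ • xᵢ₋₁, all the points x₁, …, xₙ lie in X. Then: (a) for any decomposition n = p + q + r with q ≥ 1, if (g₁, …, gₙ) is a parade in X, then the tuple of length p + 1 + r obtained by replacing the consecutive block gₚ₊₁, …, gₚ₊q by the single element gₚ₊q * gₚ₊q₋₁ * ⋯ * gₚ₊₁ (the composite acting as the block does) is again a parade in X; (b) if (g₁, …, gₙ) is a parade in X, then both concatenations (g₁, …, gₙ, gₙ⁻¹, …, g₁⁻¹) and (gₙ⁻¹, …, g₁⁻¹, g₁, …, gₙ) are parades in X. (These are the closure properties establishing the paper's Proposition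 4.1, that parades form a partial group 𝒫(X, X₀, G).) -/
/-- A list `(g₁, …, gₙ)` of group elements is a *parade* in `X ⊆ X₀` if it admits a
starting point `x ∈ X` whose successive images `x₁ = g₁ • x`, `x₂ = g₂ • x₁`, … all lie
in `X`.  The point reached after the first `i + 1` steps is
`((l.take (i+1)).reverse.prod) • x`. -/
def IsParade {G X₀ : Type*} [Group G] [MulAction G X₀] (X : Set X₀) (l : List G) : Prop :=
  ∃ x ∈ X, ∀ i < l.length, ((l.take (i + 1)).reverse.prod) • x ∈ X

private lemma F_append {G : Type*} [Group G] (a b : List G) :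
    (a ++ b).reverse.prod = b.reverse.prod * a.reverse.prod := by
  rw [List.reverse_append, List.prod_append]

/-- Reformulation of `IsParade` over all prefixes. -/
private lemma isParade_iff_prefix {G X₀ : Type*} [Group G] [MulAction G X₀] (X : Set X₀)
    (l : List G) : IsParade X l ↔
    ∃ x ∈ X, ∀ p : List G, p <+: l → p.reverse.prod • x ∈ X := by
  constructor
  · rintro ⟨x, hx, h⟩
    refine ⟨x, hx, fun p hp => ?_⟩
    rcases p with _ | ⟨a, p'⟩
    · simpa using hx
    · have hlen : p'.length + 1 ≤ l.length := by simpa using hp.length_le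
      have heq : (a :: p') = l.take (p'.length + 1) := by
        have := List.prefix_iff_eq_take.mp hp
        simpa using this
      rw [heq]
      exact h p'.length (by omega)
  · rintro ⟨x, hx, h⟩
    exact ⟨x, hx, fun i _ => h _ (List.take_prefix _ _)⟩

private lemma prefix_append_cases {α : Type*} {p a b : List α} (h : p <+: a ++ b) :
    p <+: a ∨ ∃ q, q <+: b ∧ p = a ++ q := by
  rcases h with ⟨t, ht⟩
  rcases List.append_eq_append_iff.mp ht with ⟨c, h1, h2⟩ | ⟨c, h1, h2⟩
  · left; exact ⟨c, h1.symm⟩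
  · right; exact ⟨c, ⟨t, h2.symm⟩, h1⟩

/-- A prefix of the reversed list of inverses comes from a suffix of `l`. -/
private lemma prefix_rev_inv {G : Type*} [Group G] {l q : List G}
    (h : q <+: (l.map (·⁻¹)).reverse) :
    ∃ s, s <:+ l ∧ q = (s.map (·⁻¹)).reverse := by
  have h' : q.reverse <:+ l.map (·⁻¹) := by
    rw [← List.reverse_prefix, List.reverse_reverse]; exact h
  rcases h' with ⟨t, ht⟩
  refine ⟨q.reverse.map (·⁻¹), ⟨t.map (·⁻¹), ?_⟩, by simp⟩
  have := congrArg (List.map (·⁻¹)) ht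
  simpa [List.map_map, Function.comp] using this

/-- Product of the reversed list of inverses of a suffix. -/
private lemma prod_rev_inv {G : Type*} [Group G] (s : List G) :
    ((s.map (·⁻¹)).reverse).reverse.prod = (s.reverse.prod)⁻¹ := by
  rw [List.reverse_reverse, List.prod_inv_reverse s.reverse]
  simp [List.map_reverse]

/-- A suffix `s` of `l` : `(F s)⁻¹ • (F l • x) = F (the complementary prefix) • x`. -/
private lemma suffix_decomp {G : Type*} [Group G] {s l : List G} (h : s <:+ l) :
    ∃ t, t <+: l ∧ (s.reverse.prod)⁻¹ * l.reverse.prod = t.reverse.prod := by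
  rcases h with ⟨t, ht⟩
  refine ⟨t, ⟨s, ht⟩, ?_⟩
  rw [← ht, F_append]
  group

/-- Proposition 4.1 (closure properties of parades): (a) replacing a nonempty consecutive
block of a parade by its composite yields a parade; (b) concatenating a parade with the
reversed list of inverses, on either side, yields a parade. -/
theorem parades_form_partial_group {G X₀ : Type*} [Group G] [MulAction G X₀]
    (X : Set X₀) :
    (∀ l₁ l₂ l₃ : List G, l₂ ≠ [] → IsParade X (l₁ ++ l₂ ++ l₃) →
      IsParade X (l₁ ++ [l₂.reverse.prod] ++ l₃)) ∧
    (∀ l : List G, IsParade X l →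
      IsParade X (l ++ (l.map (·⁻¹)).reverse) ∧
      IsParade X ((l.map (·⁻¹)).reverse ++ l)) := by
  constructor
  · intro l₁ l₂ l₃ _ hl
    rw [isParade_iff_prefix] at hl ⊢
    obtain ⟨x, hx, h⟩ := hl
    refine ⟨x, hx, fun p hp => ?_⟩
    rcases prefix_append_cases hp with hp1 | ⟨q, hq, rfl⟩
    · rcases prefix_append_cases hp1 with hp2 | ⟨q, hq, rfl⟩
      · exact h p (hp2.trans ((List.prefix_append _ _).trans (List.prefix_append _ _)))
      · -- q <+: [l₂.reverse.prod]
        have hq' : q = [] ∨ q = [l₂.reverse.prod] := by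
          have := (List.mem_inits q _).mpr hq
          simpa using this
        rcases hq' with rfl | rfl
        · simpa using h l₁ ((List.prefix_append _ _).trans (List.prefix_append _ _))
        · have key : (l₁ ++ [l₂.reverse.prod]).reverse.prod = (l₁ ++ l₂).reverse.prod := by
            rw [F_append, F_append]; simp
          rw [key]
          exact h (l₁ ++ l₂) (List.prefix_append _ _)
    · -- p = (l₁ ++ [l₂.reverse.prod]) ++ q, q <+: l₃
      have key : ((l₁ ++ [l₂.reverse.prod]) ++ q).reverse.prod
          = ((l₁ ++ l₂) ++ q).reverse.prod := by
        rw [F_append, F_append, F_append, F_append]; simp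
      rw [key]
      obtain ⟨t, ht⟩ := hq
      exact h _ ⟨t, by rw [List.append_assoc, ht]⟩
  · intro l hl
    rw [isParade_iff_prefix] at hl
    obtain ⟨x, hx, h⟩ := hl
    constructor
    · rw [isParade_iff_prefix]
      refine ⟨x, hx, fun p hp => ?_⟩
      rcases prefix_append_cases hp with hp1 | ⟨q, hq, rfl⟩
      · exact h p hp1
      · obtain ⟨s, hs, rfl⟩ := prefix_rev_inv hq
        obtain ⟨t, ht, hprod⟩ := suffix_decomp hs
        rw [F_append, prod_rev_inv, mul_smul, ← mul_smul, hprod]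
        exact h t ht
    · rw [isParade_iff_prefix]
      have hlX : l.reverse.prod • x ∈ X := h l List.prefix_rfl
      refine ⟨l.reverse.prod • x, hlX, fun p hp => ?_⟩
      rcases prefix_append_cases hp with hp1 | ⟨q, hq, rfl⟩
      · obtain ⟨s, hs, rfl⟩ := prefix_rev_inv hp1
        obtain ⟨t, ht, hprod⟩ := suffix_decomp hs
        rw [prod_rev_inv, ← mul_smul, hprod]
        exact h t ht
      · rw [F_append, prod_rev_inv, ← mul_smul]
        simpa [mul_assoc] using h q hq
end

section
/- Let d ≥ 1 and let F ⊆ E := EuclideanSpace ℝ (Fin d) be nonempty and connected (as a topological subspace, i.e., IsConnected F). Then { e : E ≃ᵢ E | ∃ K ∈ cc F, e '' K ∈ cc F } = { e : E ≃ᵢ E | e '' F = F }, where cc F denotes the set of connected components of F. Moreover, for every n and every tuple (e₁, …, eₙ) of isometric bijections, there exists K ∈ cc F with K, e₁ '' K, e₂ '' (e₁ '' K), …, eₙ '' (⋯ (e₁ '' K)) all in cc F if and only if every eᵢ satisfies eᵢ '' F = F. (This is the paper's Proposition 6.1(2): for connected F, the symmetry partial group 𝒫(F) coincides with the symmetry group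 G(F).) -/
/-- The set of connected components of a figure `F`. -/
def connComps {d : ℕ} (F : Set (EuclideanSpace ℝ (Fin d))) :
    Set (Set (EuclideanSpace ℝ (Fin d))) :=
  {K | ∃ x ∈ F, K = connectedComponentIn F x}

lemma connComps_eq_iff {d : ℕ} {F K : Set (EuclideanSpace ℝ (Fin d))}
    (hF : IsConnected F) : K ∈ connComps F ↔ K = F := by
  constructor
  · rintro ⟨x, hx, rfl⟩
    exact hF.isPreconnected.connectedComponentIn hx
  · rintro rfl
    obtain ⟨x, hx⟩ := hF.nonempty
    exact ⟨x, hx, (hF.isPreconnected.connectedComponentIn hx).symm⟩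

/-- Proposition 6.1(2): for a nonempty connected figure `F`, the symmetry partial group
`𝒫(F)` coincides with the symmetry group `G(F)`: at level 1 the length-1 parades are
exactly the symmetries of `F`, and a tuple of isometries is a parade on components if and
only if each entry is a symmetry of `F`. -/
theorem partial_group_eq_group_of_connected (d : ℕ) (hd : 1 ≤ d)
    (F : Set (EuclideanSpace ℝ (Fin d))) (hF : IsConnected F) :
    ({e : EuclideanSpace ℝ (Fin d) ≃ᵢ EuclideanSpace ℝ (Fin d) |
        ∃ K ∈ connComps F, e '' K ∈ connComps F} =
      {e : EuclideanSpace ℝ (Fin d) ≃ᵢ EuclideanSpace ℝ (Fin d) | e '' F = F}) ∧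
    (∀ (n : ℕ) (g : Fin n → (EuclideanSpace ℝ (Fin d) ≃ᵢ EuclideanSpace ℝ (Fin d))),
      (∃ K : Fin (n + 1) → Set (EuclideanSpace ℝ (Fin d)),
        K 0 ∈ connComps F ∧
        (∀ i : Fin n, K i.succ = g i '' K i.castSucc) ∧
        (∀ i : Fin n, K i.succ ∈ connComps F)) ↔
      ∀ i : Fin n, g i '' F = F) := by
  constructor
  · ext e
    simp only [Set.mem_setOf_eq, connComps_eq_iff hF]
    constructor
    · rintro ⟨K, rfl, h⟩; exact h
    · intro h; exact ⟨F, rfl, h⟩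
  · intro n g
    constructor
    · rintro ⟨K, h0, hstep, hmem⟩ i
      have hall : ∀ j : Fin (n + 1), K j = F := by
        intro j
        induction j using Fin.induction with
        | zero => exact (connComps_eq_iff hF).mp h0
        | succ k ih => exact (connComps_eq_iff hF).mp (hmem k)
      have := hstep i
      rw [hall i.succ, hall i.castSucc] at this
      exact this.symm
    · intro h
      refine ⟨fun _ => F, (connComps_eq_iff hF).mpr rfl, fun i => (h i).symm,
        fun i => (connComps_eq_iff hF).mpr rfl⟩
end

section
/- Let d ≥ 1 and let F ⊆ E := EuclideanSpace ℝ (Fin d). Suppose the set cc F of connected components of F is finite, and that for every K ∈ cc F the symmetry group G(K) := { e : E ≃ᵢ E | e '' K = K } is finite. Then the set 𝒫(F)₁ := { e : E ≃ᵢ E | ∃ K ∈ cc F, e '' K ∈ cc F } is finite. (This is the paper's Proposition 6.1(5): the symmetry partial group 𝒫(F) is finite.) -/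
/-- Proposition 6.1(5): if `F` has finitely many connected components and each component
has finite symmetry group, then the set `𝒫(F)₁` of length-1 parades of the symmetry
partial group is finite. -/
theorem partial_symmetry_group_finite (d : ℕ) (hd : 1 ≤ d)
    (F : Set (EuclideanSpace ℝ (Fin d)))
    (hcc : (connComps F).Finite)
    (hG : ∀ K ∈ connComps F,
      {e : EuclideanSpace ℝ (Fin d) ≃ᵢ EuclideanSpace ℝ (Fin d) | e '' K = K}.Finite) :
    {e : EuclideanSpace ℝ (Fin d) ≃ᵢ EuclideanSpace ℝ (Fin d) |
      ∃ K ∈ connComps F, e '' K ∈ connComps F}.Finite := by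
  have key : ∀ K ∈ connComps F, ∀ L : Set (EuclideanSpace ℝ (Fin d)),
      {e : EuclideanSpace ℝ (Fin d) ≃ᵢ EuclideanSpace ℝ (Fin d) | e '' K = L}.Finite := by
    intro K hK L
    rcases Set.eq_empty_or_nonempty
        {e : EuclideanSpace ℝ (Fin d) ≃ᵢ EuclideanSpace ℝ (Fin d) | e '' K = L} with h | ⟨e₀, he₀⟩
    · simp [h]
    · have hsub : {e : EuclideanSpace ℝ (Fin d) ≃ᵢ EuclideanSpace ℝ (Fin d) | e '' K = L} ⊆
          (fun g => g.trans e₀) ''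
            {e : EuclideanSpace ℝ (Fin d) ≃ᵢ EuclideanSpace ℝ (Fin d) | e '' K = K} := by
        intro e he
        refine ⟨e.trans e₀.symm, ?_, ?_⟩
        · show (e.trans e₀.symm) '' K = K
          have : ⇑(e.trans e₀.symm) = ⇑e₀.symm ∘ ⇑e := rfl
          rw [this, Set.image_comp, he, ← he₀, ← Set.image_comp]
          simp
        · ext x; simp
      exact ((hG K hK).image _).subset hsub
  have hsub : {e : EuclideanSpace ℝ (Fin d) ≃ᵢ EuclideanSpace ℝ (Fin d) |
      ∃ K ∈ connComps F, e '' K ∈ connComps F} ⊆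
      ⋃ K ∈ connComps F, ⋃ L ∈ connComps F,
        {e : EuclideanSpace ℝ (Fin d) ≃ᵢ EuclideanSpace ℝ (Fin d) | e '' K = L} := by
    rintro e ⟨K, hK, hL⟩
    exact Set.mem_biUnion hK (Set.mem_biUnion hL rfl)
  exact (hcc.biUnion fun K hK => hcc.biUnion fun L _ => key K hK L).subset hsub
end

section
/- Let G be a group and (H_ω)_{ω ∈ Ω} a family of groups. Let W be the wedge sum of the family: the quotient of the sigma type Σ ω, H_ω by the equivalence relation identifying (ω, 1) with (ω', 1) for all ω, ω'; write [ω, h] for the class of (ω, h) and 1 for the common class of the units. Let ψ : G → W be a function with ψ(1) = 1 such that for all b, c ∈ G there exist ω ∈ Ω and h, k ∈ H_ω with ψ(b) = [ω, h], ψ(c) = [ω, k], and ψ(b c) = [ω, h k]. If ψ(G) ≠ {1}, then there exist a unique χ ∈ Ω and a unique group homomorphism f : G → H_χ such that ψ(g) = [χ, f g] for every g ∈ G. (This is the paper's Lemma 7.1, with the hypothesis that ψ is a map of partial groups from G to ⋁_ω H_ω unfolded.) -/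
/-- The identification relation of the wedge sum of a family of groups: two elements of
the sigma type are related iff they are equal or both are units. -/
def wedgeRel {Ω : Type*} (H : Ω → Type*) [∀ ω, Group (H ω)]
    (a b : Σ ω, H ω) : Prop :=
  a = b ∨ (a.2 = 1 ∧ b.2 = 1)

/-- The wedge sum `⋁_ω H_ω` of a family of groups: the quotient of `Σ ω, H ω`
identifying all the units to a single point. -/
def Wedge {Ω : Type*} (H : Ω → Type*) [∀ ω, Group (H ω)] : Type _ :=
  Quot (wedgeRel H)

/-- `[ω, h]`, the class of `(ω, h)` in the wedge sum. -/
def wedgeMk {Ω : Type*} (H : Ω → Type*) [∀ ω, Group (H ω)] (ω : Ω) (h : H ω) :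
    Wedge H :=
  Quot.mk (wedgeRel H) ⟨ω, h⟩

lemma wedgeRel_equivalence {Ω : Type*} (H : Ω → Type*) [∀ ω, Group (H ω)] :
    Equivalence (wedgeRel H) := by
  constructor
  · exact fun a => Or.inl rfl
  · rintro a b (rfl | ⟨h1, h2⟩)
    · exact Or.inl rfl
    · exact Or.inr ⟨h2, h1⟩
  · rintro a b c (rfl | ⟨h1, h2⟩) (rfl | ⟨h3, h4⟩)
    · exact Or.inl rfl
    · exact Or.inr ⟨h3, h4⟩
    · exact Or.inr ⟨h1, h2⟩
    · exact Or.inr ⟨h1, h4⟩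

lemma wedgeMk_eq_iff {Ω : Type*} (H : Ω → Type*) [∀ ω, Group (H ω)]
    {ω ω' : Ω} {h : H ω} {h' : H ω'} :
    wedgeMk H ω h = wedgeMk H ω' h' ↔
      ((⟨ω, h⟩ : Σ ω, H ω) = ⟨ω', h'⟩ ∨ (h = 1 ∧ h' = 1)) := by
  constructor
  · intro e
    have := (Quot.eq.mp e)
    exact (wedgeRel_equivalence H).eqvGen_iff.mp this
  · intro e
    exact Quot.sound e

lemma wedgeMk_inj_same {Ω : Type*} (H : Ω → Type*) [∀ ω, Group (H ω)]
    {ω : Ω} {h h' : H ω} (e : wedgeMk H ω h = wedgeMk H ω h') : h = h' := by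
  rcases (wedgeMk_eq_iff H).mp e with e | ⟨e1, e2⟩
  · exact eq_of_heq (Sigma.mk.inj_iff.mp e).2
  · rw [e1, e2]

/-- Lemma 7.1: a map of partial groups `ψ` from a group `G` to a wedge sum of groups with
`ψ(G) ≠ {1}` factors uniquely through a unique summand via a group homomorphism. -/
theorem map_from_group_to_wedge {G : Type*} [Group G] {Ω : Type*}
    (H : Ω → Type*) [∀ ω, Group (H ω)]
    (ψ : G → Wedge H)
    (hψ1 : ∀ ω : Ω, ψ 1 = wedgeMk H ω 1)
    (hψ : ∀ b c : G, ∃ (ω : Ω) (h k : H ω),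
      ψ b = wedgeMk H ω h ∧ ψ c = wedgeMk H ω k ∧ ψ (b * c) = wedgeMk H ω (h * k))
    (hne : ∃ g : G, ∀ ω : Ω, ψ g ≠ wedgeMk H ω 1) :
    ∃! χ : Ω, ∃! f : G →* H χ, ∀ g : G, ψ g = wedgeMk H χ (f g) := by
  obtain ⟨g₀, hg₀⟩ := hne
  obtain ⟨ω₀, h₀, k₀, e₀, -, -⟩ := hψ g₀ g₀
  have h₀ne : h₀ ≠ 1 := by rintro rfl; exact hg₀ ω₀ e₀
  -- every value of ψ lies in the summand ω₀
  have key : ∀ g : G, ∃ k : H ω₀, ψ g = wedgeMk H ω₀ k := by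
    intro g
    obtain ⟨ω, h, k, eb, ec, -⟩ := hψ g g₀
    have : wedgeMk H ω₀ h₀ = wedgeMk H ω k := e₀ ▸ ec
    rcases (wedgeMk_eq_iff H).mp this with e | ⟨e1, -⟩
    · obtain ⟨rfl, -⟩ := Sigma.mk.inj_iff.mp e
      exact ⟨h, eb⟩
    · exact absurd e1 h₀ne
  choose φ hφ using key
  have φuniq : ∀ (g : G) (k : H ω₀), ψ g = wedgeMk H ω₀ k → φ g = k := by
    intro g k e
    exact wedgeMk_inj_same H ((hφ g).symm.trans e)
  have φmul : ∀ b c : G, φ (b * c) = φ b * φ c := by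
    intro b c
    obtain ⟨ω, h, k, eb, ec, ebc⟩ := hψ b c
    by_cases hh : h = 1
    · subst hh
      by_cases hk : k = 1
      · subst hk
        have fb : φ b = 1 := φuniq b 1 (eb.trans (Quot.sound (Or.inr ⟨rfl, rfl⟩)))
        have fc : φ c = 1 := φuniq c 1 (ec.trans (Quot.sound (Or.inr ⟨rfl, rfl⟩)))
        have fbc : φ (b * c) = 1 := φuniq (b * c) 1
          (ebc.trans (Quot.sound (Or.inr ⟨mul_one (1 : H ω), rfl⟩)))
        rw [fb, fc, fbc, mul_one]
      · -- k ≠ 1, so ω = ω₀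
        have : wedgeMk H ω₀ (φ c) = wedgeMk H ω k := (hφ c).symm.trans ec
        rcases (wedgeMk_eq_iff H).mp this with e | ⟨-, e2⟩
        · obtain ⟨rfl, he⟩ := Sigma.mk.inj_iff.mp e
          have hk' : φ c = k := eq_of_heq he
          have fb : φ b = 1 := φuniq b 1 (eb.trans (Quot.sound (Or.inr ⟨rfl, rfl⟩)))
          have fbc : φ (b * c) = k := φuniq (b * c) k (by rw [ebc, one_mul])
          rw [fb, fbc, hk', one_mul]
        · exact absurd e2 hk
    · -- h ≠ 1, so ω = ω₀
      have : wedgeMk H ω₀ (φ b) = wedgeMk H ω h := (hφ b).symm.trans eb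
      rcases (wedgeMk_eq_iff H).mp this with e | ⟨-, e2⟩
      · obtain ⟨rfl, he⟩ := Sigma.mk.inj_iff.mp e
        have hb' : φ b = h := eq_of_heq he
        have hc' : φ c = k := φuniq c k ec
        have fbc : φ (b * c) = h * k := φuniq (b * c) (h * k) ebc
        rw [hb', hc', fbc]
      · exact absurd e2 hh
  refine ⟨ω₀, ⟨MonoidHom.mk' φ φmul, hφ, ?_⟩, ?_⟩
  · intro f hf
    ext g
    exact (φuniq g (f g) (hf g)).symm
  · rintro χ ⟨f, hf, -⟩
    have : wedgeMk H ω₀ h₀ = wedgeMk H χ (f g₀) := e₀ ▸ hf g₀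
    rcases (wedgeMk_eq_iff H).mp this with e | ⟨e1, -⟩
    · exact ((Sigma.mk.inj_iff.mp e).1).symm
    · exact absurd e1 h₀ne
end

section
/- Let (G_λ)_{λ ∈ Λ} and (H_ω)_{ω ∈ Ω} be families of nontrivial groups, and let W_G and W_H be their wedge sums (quotients of Σ λ, G_λ and Σ ω, H_ω identifying all units to single base points 1). Let φ : W_G → W_H be a bijection with φ(1) = 1 such that: for every λ and all b, c ∈ G_λ there exist ω ∈ Ω and h, k ∈ H_ω with φ[λ, b] = [ω, h], φ[λ, c] = [ω, k], and φ[λ, b c] = [ω, h k]; and the inverse bijection φ⁻¹ satisfies the analogous condition with the roles of the two families interchanged. Then there exist a bijection θ : Λ ≃ Ω and group isomorphisms f_λ : G_λ ≃* H_{θ λ} (λ ∈ Λ) such that φ[λ, b] = [θ λ, f_λ b] for all λ ∈ Λ and b ∈ G_λ. (This is the paper's Theorem 7.2: an isomorphism of wedge sums of nontrivial groups, as partial groups, is induced by a relabelling bijection together with summandwise group isomorphisms.) -/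
lemma wedgeMk_eq_of_ne {Ω : Type*} (H : Ω → Type*) [∀ ω, Group (H ω)]
    {ω ω' : Ω} {h : H ω} {h' : H ω'}
    (e : wedgeMk H ω h = wedgeMk H ω' h') (hne : h' ≠ 1) :
    (⟨ω, h⟩ : Σ ω, H ω) = ⟨ω', h'⟩ := by
  rcases (wedgeMk_eq_iff H).1 e with he | ⟨_, h2⟩
  · exact he
  · exact absurd h2 hne

/-- Key half of the theorem: an injective, unit-and-product respecting map between
wedge sums is given on each summand by an index map together with unit-reflecting
multiplicative maps. -/
lemma wedge_aux {Λ Ω : Type*}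
    (G : Λ → Type*) [∀ l, Group (G l)] (H : Ω → Type*) [∀ ω, Group (H ω)]
    (hG : ∀ l : Λ, ∃ a : G l, a ≠ 1)
    (φ : Wedge G → Wedge H) (φinj : Function.Injective φ)
    (hφ1 : ∀ (l : Λ) (ω : Ω), φ (wedgeMk G l 1) = wedgeMk H ω 1)
    (hφ : ∀ (l : Λ) (b c : G l), ∃ (ω : Ω) (h k : H ω),
      φ (wedgeMk G l b) = wedgeMk H ω h ∧ φ (wedgeMk G l c) = wedgeMk H ω k ∧
      φ (wedgeMk G l (b * c)) = wedgeMk H ω (h * k)) :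
    ∃ (θ : Λ → Ω) (f : ∀ l, G l → H (θ l)),
      (∀ l (b : G l), φ (wedgeMk G l b) = wedgeMk H (θ l) (f l b)) ∧
      (∀ l (b : G l), f l b = 1 ↔ b = 1) ∧
      (∀ l (b c : G l), f l (b * c) = f l b * f l c) := by
  -- Step 1: nonunits go to nonunits in some summand
  have step1 : ∀ (l : Λ) (b : G l), b ≠ 1 →
      ∃ (ω : Ω) (h : H ω), h ≠ 1 ∧ φ (wedgeMk G l b) = wedgeMk H ω h := by
    intro l b hb
    obtain ⟨⟨ω, h⟩, hp⟩ := Quot.exists_rep (φ (wedgeMk G l b))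
    refine ⟨ω, h, ?_, hp.symm⟩
    intro h1
    subst h1
    have : φ (wedgeMk G l b) = φ (wedgeMk G l 1) := by
      rw [hφ1 l ω]; exact hp.symm
    have e := φinj this
    rcases (wedgeMk_eq_iff G).1 e with he | ⟨hb1, _⟩
    · obtain ⟨-, he2⟩ := Sigma.mk.inj_iff.1 he
      exact hb (eq_of_heq he2)
    · exact hb hb1
  -- Step 2: the target summand depends only on the source summand
  have key : ∀ l : Λ, ∃ ω : Ω, ∀ b : G l, b ≠ 1 →
      ∃ h : H ω, h ≠ 1 ∧ φ (wedgeMk G l b) = wedgeMk H ω h := by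
    intro l
    obtain ⟨a, ha⟩ := hG l
    obtain ⟨ω, h0, h0ne, hφa⟩ := step1 l a ha
    refine ⟨ω, fun b hb => ?_⟩
    obtain ⟨ω', k, kne, hφb⟩ := step1 l b hb
    obtain ⟨ω'', h', k', e1, e2, -⟩ := hφ l a b
    -- from e1 and hφa : ω'' = ω
    have s1 := wedgeMk_eq_of_ne H (e1.symm.trans hφa) h0ne
    obtain ⟨rfl, -⟩ := Sigma.mk.inj_iff.1 s1
    -- from e2 and hφb : ω' = ω'' = ω
    have s2 := wedgeMk_eq_of_ne H (e2.symm.trans hφb) kne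
    obtain ⟨rfl, -⟩ := Sigma.mk.inj_iff.1 s2
    exact ⟨k, kne, hφb⟩
  choose θ keyspec using key
  classical
  refine ⟨θ, fun l b => if hb : b = 1 then 1 else Classical.choose (keyspec l b hb),
    ?_, ?_, ?_⟩
  case _ =>
    intro l b
    by_cases hb : b = 1
    · subst hb; simp [hφ1 l (θ l)]
    · simp only [dif_neg hb]
      exact (Classical.choose_spec (keyspec l b hb)).2
  case _ =>
    intro l b
    by_cases hb : b = 1
    · simp [hb]
    · simp only [dif_neg hb]
      exact ⟨fun h1 => absurd h1 (Classical.choose_spec (keyspec l b hb)).1,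
        fun h1 => absurd h1 hb⟩
  case _ =>
    -- name the function and its basic properties
    set f : ∀ l, G l → H (θ l) :=
      fun l b => if hb : b = 1 then 1 else Classical.choose (keyspec l b hb) with hf
    have main : ∀ l (b : G l), φ (wedgeMk G l b) = wedgeMk H (θ l) (f l b) := by
      intro l b
      by_cases hb : b = 1
      · subst hb; simp [hf, hφ1 l (θ l)]
      · simp only [hf, dif_neg hb]
        exact (Classical.choose_spec (keyspec l b hb)).2
    have funit : ∀ l (b : G l), f l b = 1 ↔ b = 1 := by
      intro l b
      by_cases hb : b = 1
      · simp [hf, hb]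
      · simp only [hf, dif_neg hb]
        exact ⟨fun h1 => absurd h1 (Classical.choose_spec (keyspec l b hb)).1,
          fun h1 => absurd h1 hb⟩
    intro l b c
    by_cases hb : b = 1
    · subst hb
      have h1 : f l (1 : G l) = 1 := (funit l 1).2 rfl
      rw [one_mul, h1, one_mul]
    by_cases hc : c = 1
    · subst hc
      have h1 : f l (1 : G l) = 1 := (funit l 1).2 rfl
      rw [mul_one, h1, mul_one]
    -- both nonunits
    have hfb : f l b ≠ 1 := fun h1 => hb ((funit l b).1 h1)
    have hfc : f l c ≠ 1 := fun h1 => hc ((funit l c).1 h1)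
    obtain ⟨ω, h, k, e1, e2, e3⟩ := hφ l b c
    have s1 := wedgeMk_eq_of_ne H (e1.symm.trans (main l b)) hfb
    obtain ⟨rfl, hh⟩ := Sigma.mk.inj_iff.1 s1
    have hh' : h = f l b := eq_of_heq hh
    have s2 := wedgeMk_eq_of_ne H (e2.symm.trans (main l c)) hfc
    obtain ⟨-, hk⟩ := Sigma.mk.inj_iff.1 s2
    have hk' : k = f l c := eq_of_heq hk
    subst hh' hk'
    have e4 : wedgeMk H (θ l) (f l b * f l c) = wedgeMk H (θ l) (f l (b * c)) :=
      e3.symm.trans (main l (b * c))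
    rcases (wedgeMk_eq_iff H).1 e4 with he | ⟨hu1, hu2⟩
    · obtain ⟨-, he2⟩ := Sigma.mk.inj_iff.1 he
      exact (eq_of_heq he2).symm
    · rw [hu1, hu2]

/-- Theorem 7.2: an isomorphism of partial groups between wedge sums of families of
nontrivial groups is induced by a relabelling bijection of the index sets together with
summandwise group isomorphisms. -/
theorem wedge_iso_induced {Λ Ω : Type*}
    (G : Λ → Type*) [∀ l, Group (G l)] (H : Ω → Type*) [∀ ω, Group (H ω)]
    (hG : ∀ l : Λ, ∃ a : G l, a ≠ 1) (hH : ∀ ω : Ω, ∃ h : H ω, h ≠ 1)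
    (φ : Wedge G → Wedge H) (φinv : Wedge H → Wedge G)
    (hli : Function.LeftInverse φinv φ) (hri : Function.RightInverse φinv φ)
    (hφ1 : ∀ (l : Λ) (ω : Ω), φ (wedgeMk G l 1) = wedgeMk H ω 1)
    (hφ : ∀ (l : Λ) (b c : G l), ∃ (ω : Ω) (h k : H ω),
      φ (wedgeMk G l b) = wedgeMk H ω h ∧ φ (wedgeMk G l c) = wedgeMk H ω k ∧
      φ (wedgeMk G l (b * c)) = wedgeMk H ω (h * k))
    (hφinv : ∀ (ω : Ω) (h k : H ω), ∃ (l : Λ) (b c : G l),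
      φinv (wedgeMk H ω h) = wedgeMk G l b ∧ φinv (wedgeMk H ω k) = wedgeMk G l c ∧
      φinv (wedgeMk H ω (h * k)) = wedgeMk G l (b * c)) :
    ∃ (θ : Λ ≃ Ω) (f : ∀ l : Λ, G l ≃* H (θ l)),
      ∀ (l : Λ) (b : G l), φ (wedgeMk G l b) = wedgeMk H (θ l) (f l b) := by
  have φinj : Function.Injective φ := hli.injective
  have φinvinj : Function.Injective φinv := Function.LeftInverse.injective hri
  have hφinv1 : ∀ (ω : Ω) (l : Λ), φinv (wedgeMk H ω 1) = wedgeMk G l 1 := by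
    intro ω l
    have := hli (wedgeMk G l 1)
    rwa [hφ1 l ω] at this
  have hφinv' : ∀ (ω : Ω) (h k : H ω), ∃ (l : Λ) (b c : G l),
      φinv (wedgeMk H ω h) = wedgeMk G l b ∧ φinv (wedgeMk H ω k) = wedgeMk G l c ∧
      φinv (wedgeMk H ω (h * k)) = wedgeMk G l (b * c) := hφinv
  obtain ⟨θ0, f0, main0, unit0, mul0⟩ := wedge_aux G H hG φ φinj hφ1 hφ
  obtain ⟨θ1, f1, main1, unit1, -⟩ := wedge_aux H G hH φinv φinvinj hφinv1 hφinv'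
  -- θ1 is a two-sided inverse of θ0
  have leftInv : ∀ l : Λ, θ1 (θ0 l) = l := by
    intro l
    obtain ⟨a, ha⟩ := hG l
    have e := hli (wedgeMk G l a)
    rw [main0 l a, main1 (θ0 l) (f0 l a)] at e
    have := wedgeMk_eq_of_ne G e ha
    exact (Sigma.mk.inj_iff.1 this).1
  have rightInv : ∀ ω : Ω, θ0 (θ1 ω) = ω := by
    intro ω
    obtain ⟨h, hh⟩ := hH ω
    have e := hri (wedgeMk H ω h)
    rw [main1 ω h, main0 (θ1 ω) (f1 ω h)] at e
    have := wedgeMk_eq_of_ne H e hh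
    exact (Sigma.mk.inj_iff.1 this).1
  have θ0inj : Function.Injective θ0 := Function.LeftInverse.injective leftInv
  -- each f0 l is bijective
  have finj : ∀ l : Λ, Function.Injective (f0 l) := by
    intro l b b' hbb
    have : φ (wedgeMk G l b) = φ (wedgeMk G l b') := by
      rw [main0 l b, main0 l b', hbb]
    have e := φinj this
    rcases (wedgeMk_eq_iff G).1 e with he | ⟨h1, h2⟩
    · exact eq_of_heq (Sigma.mk.inj_iff.1 he).2
    · rw [h1, h2]
  have fsurj : ∀ l : Λ, Function.Surjective (f0 l) := by
    intro l h
    by_cases hh : h = 1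
    · exact ⟨1, by rw [hh]; exact (unit0 l 1).2 rfl⟩
    · obtain ⟨⟨l', b'⟩, hp⟩ := Quot.exists_rep (φinv (wedgeMk H (θ0 l) h))
      have hp' : φinv (wedgeMk H (θ0 l) h) = wedgeMk G l' b' := hp.symm
      have e := hri (wedgeMk H (θ0 l) h)
      rw [hp', main0 l' b'] at e
      have s := wedgeMk_eq_of_ne H e hh
      obtain ⟨hθ, hheq⟩ := Sigma.mk.inj_iff.1 s
      obtain rfl : l' = l := θ0inj hθ
      exact ⟨b', eq_of_heq hheq⟩
  refine ⟨⟨θ0, θ1, leftInv, rightInv⟩,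
    fun l => MulEquiv.mk' (Equiv.ofBijective (f0 l) ⟨finj l, fsurj l⟩) (mul0 l), ?_⟩
  intro l b
  exact main0 l b
end

section
/- Let d ≥ 1 and let F₊, F₋ ⊆ E := EuclideanSpace ℝ (Fin d) be nonempty and disjoint, and let a : E ≃ᵢ E be an isometric bijection with a '' F₊ = F₋ and a '' F₋ = F₊. Then the map ({0, 1} × (G(F₊) ∪ G(F₋))) → { e : E ≃ᵢ E | e '' F₊ ∈ {F₊, F₋} ∨ e '' F₋ ∈ {F₊, F₋} } sending (ι, η) to the composite η ∘ aᶦ (first apply a ι times, then η) is a bijection. (This is the degree-1 content of the paper's Theorem 8.2: for a figure F with two connected components interchanged by an isometry a, the symmetry partial group 𝒫(F) is isomorphic to the twisted semidirect product C₂ ⋉_{↼,σ} (G(F₊) ∨_{G(F₊) ∩ G(F₋)} G(F₋)), via ψ(cᶦ, η) = aᶦ η.) -/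
/-- Theorem 8.2 (degree-1 content): if the two components `F₊`, `F₋` of a figure are
interchanged by an isometry `a`, then `(ι, η) ↦ η ∘ aᶦ` is a bijection from
`{0, 1} × (G(F₊) ∪ G(F₋))` onto the set of length-1 parades `𝒫(F)₁`. -/
theorem parade_bijection_two_swapped_components (d : ℕ) (hd : 1 ≤ d)
    (Fp Fm : Set (EuclideanSpace ℝ (Fin d)))
    (hFp : Fp.Nonempty) (hFm : Fm.Nonempty) (hdisj : Disjoint Fp Fm)
    (a : EuclideanSpace ℝ (Fin d) ≃ᵢ EuclideanSpace ℝ (Fin d))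
    (hap : a '' Fp = Fm) (ham : a '' Fm = Fp) :
    Set.BijOn
      (fun p : Fin 2 × (EuclideanSpace ℝ (Fin d) ≃ᵢ EuclideanSpace ℝ (Fin d)) =>
        (a ^ (p.1 : ℕ)).trans p.2)
      (Set.univ ×ˢ
        ({η : EuclideanSpace ℝ (Fin d) ≃ᵢ EuclideanSpace ℝ (Fin d) | η '' Fp = Fp} ∪
         {η : EuclideanSpace ℝ (Fin d) ≃ᵢ EuclideanSpace ℝ (Fin d) | η '' Fm = Fm}))
      {e : EuclideanSpace ℝ (Fin d) ≃ᵢ EuclideanSpace ℝ (Fin d) |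
        e '' Fp ∈ ({Fp, Fm} : Set (Set (EuclideanSpace ℝ (Fin d)))) ∨
        e '' Fm ∈ ({Fp, Fm} : Set (Set (EuclideanSpace ℝ (Fin d))))} := by
  have hne : Fp ≠ Fm := by
    intro h
    subst h
    exact hFp.ne_empty (disjoint_self.mp hdisj)
  have himg : ∀ (e : EuclideanSpace ℝ (Fin d) ≃ᵢ EuclideanSpace ℝ (Fin d)),
      Function.Injective (Set.image ⇑e) := fun e => Set.image_injective.mpr e.injective
  have htr : ∀ (e f : EuclideanSpace ℝ (Fin d) ≃ᵢ EuclideanSpace ℝ (Fin d))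
      (s : Set (EuclideanSpace ℝ (Fin d))), (e.trans f) '' s = f '' (e '' s) := by
    intro e f s; simp [Set.image_image]; rfl
  have h0 : ∀ (η : EuclideanSpace ℝ (Fin d) ≃ᵢ EuclideanSpace ℝ (Fin d)),
      (a ^ (0 : ℕ)).trans η = η := by intro η; ext x; simp
  have h1 : ∀ (η : EuclideanSpace ℝ (Fin d) ≃ᵢ EuclideanSpace ℝ (Fin d)),
      (a ^ (1 : ℕ)).trans η = a.trans η := by intro η; ext x; simp
  have hsm : a.symm '' Fm = Fp := by rw [← hap]; simp [Set.image_image]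
  have hsp : a.symm '' Fp = Fm := by rw [← ham]; simp [Set.image_image]
  have key : ∀ η η' : EuclideanSpace ℝ (Fin d) ≃ᵢ EuclideanSpace ℝ (Fin d),
      (η '' Fp = Fp ∨ η '' Fm = Fm) → (η' '' Fp = Fp ∨ η' '' Fm = Fm) →
      η ≠ a.trans η' := by
    intro η η' hη hη' h
    have e1 : η '' Fp = η' '' Fm := by rw [h, htr, hap]
    have e2 : η '' Fm = η' '' Fp := by rw [h, htr, ham]
    rcases hη with hη | hη <;> rcases hη' with hη' | hη'
    · exact hne (himg η' ((hη'.trans hη.symm).trans e1))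
    · exact hne ((hη.symm.trans e1).trans hη')
    · exact hne ((hη'.symm.trans e2.symm).trans hη)
    · exact hne (himg η' (e2.symm.trans (hη.trans hη'.symm)))
  refine ⟨?_, ?_, ?_⟩
  · rintro ⟨i, η⟩ ⟨-, hη⟩
    simp only [Set.mem_setOf_eq, Set.mem_insert_iff, Set.mem_singleton_iff]
    obtain hi | hi : (i : ℕ) = 0 ∨ (i : ℕ) = 1 := by omega
    · rw [hi, h0]
      rcases hη with hη | hη
      · exact Or.inl (Or.inl hη)
      · exact Or.inr (Or.inr hη)
    · rw [hi, h1, htr, htr, hap, ham]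
      rcases hη with hη | hη
      · exact Or.inr (Or.inl hη)
      · exact Or.inl (Or.inr hη)
  · rintro ⟨i, η⟩ ⟨-, hη⟩ ⟨j, η'⟩ ⟨-, hη'⟩ heq
    simp only at heq
    have hη2 : η '' Fp = Fp ∨ η '' Fm = Fm := hη
    have hη'2 : η' '' Fp = Fp ∨ η' '' Fm = Fm := hη'
    obtain hi | hi : (i : ℕ) = 0 ∨ (i : ℕ) = 1 := by omega
    all_goals obtain hj | hj : (j : ℕ) = 0 ∨ (j : ℕ) = 1 := by omega
    · rw [hi, hj, h0, h0] at heq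
      exact Prod.ext (Fin.ext (hi.trans hj.symm)) heq
    · rw [hi, hj, h0, h1] at heq
      exact absurd heq (key η η' hη2 hη'2)
    · rw [hi, hj, h1, h0] at heq
      exact absurd heq.symm (key η' η hη'2 hη2)
    · rw [hi, hj, h1, h1] at heq
      have hee : η = η' := by
        apply IsometryEquiv.ext
        intro x
        have := congrArg (fun e : EuclideanSpace ℝ (Fin d) ≃ᵢ EuclideanSpace ℝ (Fin d) =>
          e (a.symm x)) heq
        simpa using this
      exact Prod.ext (Fin.ext (hi.trans hj.symm)) hee
  · rintro e he
    simp only [Set.mem_setOf_eq, Set.mem_insert_iff, Set.mem_singleton_iff] at he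
    rcases he with (h | h) | (h | h)
    · exact ⟨(0, e), ⟨trivial, Or.inl h⟩, h0 e⟩
    · refine ⟨(1, a.symm.trans e), ⟨trivial, Or.inr ?_⟩, ?_⟩
      · show (a.symm.trans e) '' Fm = Fm
        rw [htr, hsm, h]
      · show (a ^ (1 : ℕ)).trans (a.symm.trans e) = e
        rw [h1]; ext x; simp
    · refine ⟨(1, a.symm.trans e), ⟨trivial, Or.inl ?_⟩, ?_⟩
      · show (a.symm.trans e) '' Fp = Fp
        rw [htr, hsp, h]
      · show (a ^ (1 : ℕ)).trans (a.symm.trans e) = e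
        rw [h1]; ext x; simp
    · exact ⟨(0, e), ⟨trivial, Or.inr h⟩, h0 e⟩
end

section
/- Let d ≥ 1 and let F₀, F₁ ⊆ E := EuclideanSpace ℝ (Fin d) satisfy 0 < diam F₀ < ∞ and 0 < diam F₁ < ∞, and assume no isometric bijection of E maps F₀ onto F₁. Let γ : E → E be a bijective similarity (i.e., a bijection with dist (γ x) (γ y) = r * dist x y for all x, y, for some r > 0) such that γ '' F₀ = F₁. Then the set S := { s bijective similarity of E | s '' F₀ ∈ {F₀, F₁} ∨ s '' F₁ ∈ {F₀, F₁} } decomposes as the pairwise disjoint union S = A ⊔ B ⊔ C, where A := { s ∈ S | s '' F₀ = F₀ ∨ s '' F₁ = F₁ }, B := { η ∘ γ | η : E ≃ᵢ E an isometric bijection with η '' F₁ = F₁ }, C := { η ∘ γ⁻¹ | η : E ≃ᵢ E an isometric bijection with η '' F₀ = F₀ }; moreover every element of A is an isometry of E. (This is the decomposition Sim𝒫(F)₁ = H₁ ⊔ γ G₁ ⊔ γ⁻¹ G₀ established in the proof of the paper's Theorem 12.2, for a figure with two similar but non-congruent connected components of finite positive diameter.) -/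
/-- A bijective similarity of Euclidean space: a bijection multiplying all distances by
a fixed positive ratio. -/
def IsBijectiveSimilarity {d : ℕ}
    (s : EuclideanSpace ℝ (Fin d) → EuclideanSpace ℝ (Fin d)) : Prop :=
  Function.Bijective s ∧ ∃ r : ℝ, 0 < r ∧ ∀ x y, dist (s x) (s y) = r * dist x y

/-- `Sim𝒫(F)₁`: the set of bijective similarities sending some component of
`F = F₀ ⊔ F₁` to a component. -/
def simParades {d : ℕ} (F0 F1 : Set (EuclideanSpace ℝ (Fin d))) :
    Set (EuclideanSpace ℝ (Fin d) → EuclideanSpace ℝ (Fin d)) :=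
  {s | IsBijectiveSimilarity s ∧
    (s '' F0 ∈ ({F0, F1} : Set (Set (EuclideanSpace ℝ (Fin d)))) ∨
     s '' F1 ∈ ({F0, F1} : Set (Set (EuclideanSpace ℝ (Fin d)))))}

/-- The part `H₁` of `Sim𝒫(F)₁` preserving one of the components. -/
def simParadesFix {d : ℕ} (F0 F1 : Set (EuclideanSpace ℝ (Fin d))) :
    Set (EuclideanSpace ℝ (Fin d) → EuclideanSpace ℝ (Fin d)) :=
  simParades F0 F1 ∩ {s | s '' F0 = F0 ∨ s '' F1 = F1}

/-- The coset `γ G₁` (written `η ∘ γ` with `η` an isometric symmetry of `F₁`). -/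
def simParadesUp {d : ℕ} (F1 : Set (EuclideanSpace ℝ (Fin d)))
    (γ : EuclideanSpace ℝ (Fin d) ≃ EuclideanSpace ℝ (Fin d)) :
    Set (EuclideanSpace ℝ (Fin d) → EuclideanSpace ℝ (Fin d)) :=
  {s | ∃ η : EuclideanSpace ℝ (Fin d) ≃ᵢ EuclideanSpace ℝ (Fin d),
    η '' F1 = F1 ∧ s = ⇑η ∘ ⇑γ}

/-- The coset `γ⁻¹ G₀` (written `η ∘ γ⁻¹` with `η` an isometric symmetry of `F₀`). -/
def simParadesDown {d : ℕ} (F0 : Set (EuclideanSpace ℝ (Fin d)))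
    (γ : EuclideanSpace ℝ (Fin d) ≃ EuclideanSpace ℝ (Fin d)) :
    Set (EuclideanSpace ℝ (Fin d) → EuclideanSpace ℝ (Fin d)) :=
  {s | ∃ η : EuclideanSpace ℝ (Fin d) ≃ᵢ EuclideanSpace ℝ (Fin d),
    η '' F0 = F0 ∧ s = ⇑η ∘ ⇑γ.symm}


lemma sim_ediam {d : ℕ} {s : EuclideanSpace ℝ (Fin d) → EuclideanSpace ℝ (Fin d)}
    {q : ℝ} (hq : 0 < q) (hs : ∀ x y, dist (s x) (s y) = q * dist x y)
    (A : Set (EuclideanSpace ℝ (Fin d))) :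
    EMetric.diam (s '' A) = ENNReal.ofReal q * EMetric.diam A := by
  have hed : ∀ x y : EuclideanSpace ℝ (Fin d),
      edist (s x) (s y) = ENNReal.ofReal q * edist x y := by
    intro x y
    rw [edist_dist, edist_dist, hs, ENNReal.ofReal_mul hq.le]
  apply le_antisymm
  · apply EMetric.diam_le
    rintro _ ⟨x, hx, rfl⟩ _ ⟨y, hy, rfl⟩
    rw [hed]
    exact mul_le_mul_right (EMetric.edist_le_diam_of_mem hx hy) _
  · have h1 : EMetric.diam A ≤ ENNReal.ofReal (1/q) * EMetric.diam (s '' A) := by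
      apply EMetric.diam_le
      intro x hx y hy
      have hxy : edist x y = ENNReal.ofReal (1/q) * edist (s x) (s y) := by
        rw [hed, ← mul_assoc, ← ENNReal.ofReal_mul (by positivity),
          one_div, inv_mul_cancel₀ hq.ne', ENNReal.ofReal_one, one_mul]
      rw [hxy]
      exact mul_le_mul_right
        (EMetric.edist_le_diam_of_mem (Set.mem_image_of_mem s hx)
          (Set.mem_image_of_mem s hy)) _
    calc ENNReal.ofReal q * EMetric.diam A
        ≤ ENNReal.ofReal q * (ENNReal.ofReal (1/q) * EMetric.diam (s '' A)) :=
          mul_le_mul_right h1 _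
      _ = EMetric.diam (s '' A) := by
          rw [← mul_assoc, ← ENNReal.ofReal_mul hq.le, mul_one_div, div_self hq.ne',
            ENNReal.ofReal_one, one_mul]

lemma sim_diam_real {d : ℕ} {s : EuclideanSpace ℝ (Fin d) → EuclideanSpace ℝ (Fin d)}
    {q : ℝ} (hq : 0 < q) (hs : ∀ x y, dist (s x) (s y) = q * dist x y)
    (A : Set (EuclideanSpace ℝ (Fin d))) :
    (EMetric.diam (s '' A)).toReal = q * (EMetric.diam A).toReal := by
  rw [sim_ediam hq hs A, ENNReal.toReal_mul, ENNReal.toReal_ofReal hq.le]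

/-- The decomposition `Sim𝒫(F)₁ = H₁ ⊔ γ G₁ ⊔ γ⁻¹ G₀` from the proof of Theorem 12.2:
for a figure with two similar but non-congruent components of finite positive diameter,
the bijective similarities sending a component to a component split into the isometric
symmetries, `γ` composed with symmetries of `F₁`, and `γ⁻¹` composed with symmetries of
`F₀`; moreover every element of the first part is an isometry. -/
theorem similarity_parade_decomposition (d : ℕ) (hd : 1 ≤ d)
    (F0 F1 : Set (EuclideanSpace ℝ (Fin d)))
    (h00 : 0 < EMetric.diam F0) (h0t : EMetric.diam F0 < ⊤)
    (h10 : 0 < EMetric.diam F1) (h1t : EMetric.diam F1 < ⊤)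
    (hnc : ¬ ∃ e : EuclideanSpace ℝ (Fin d) ≃ᵢ EuclideanSpace ℝ (Fin d), e '' F0 = F1)
    (γ : EuclideanSpace ℝ (Fin d) ≃ EuclideanSpace ℝ (Fin d))
    (hγsim : ∃ r : ℝ, 0 < r ∧ ∀ x y, dist (γ x) (γ y) = r * dist x y)
    (hγ : ⇑γ '' F0 = F1) :
    simParades F0 F1 =
      simParadesFix F0 F1 ∪ simParadesUp F1 γ ∪ simParadesDown F0 γ ∧
    Disjoint (simParadesFix F0 F1) (simParadesUp F1 γ) ∧
    Disjoint (simParadesFix F0 F1) (simParadesDown F0 γ) ∧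
    Disjoint (simParadesUp F1 γ) (simParadesDown F0 γ) ∧
    ∀ s ∈ simParadesFix F0 F1, Isometry s := by
  obtain ⟨r, hr, hγd⟩ := hγsim
  set a := (EMetric.diam F0).toReal with ha_def
  set b := (EMetric.diam F1).toReal with hb_def
  have ha : 0 < a := ENNReal.toReal_pos h00.ne' h0t.ne
  have hb : 0 < b := ENNReal.toReal_pos h10.ne' h1t.ne
  -- scaling for γ
  have hrab : r * a = b := by
    have h := sim_diam_real hr hγd F0
    rw [hγ] at h
    exact h.symm
  -- r ≠ 1
  have hr1 : r ≠ 1 := by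
    intro h
    apply hnc
    have hiso : Isometry ⇑γ := Isometry.of_dist_eq fun x y => by rw [hγd, h, one_mul]
    exact ⟨⟨γ, hiso⟩, hγ⟩
  -- a distinct pair of points for ratio uniqueness
  obtain ⟨x₀, -, y₀, -, hxy⟩ := EMetric.diam_pos_iff'.mp h00
  have hdxy : (0:ℝ) < dist x₀ y₀ := dist_pos.mpr hxy
  -- ratio uniqueness
  have huniq : ∀ (s : EuclideanSpace ℝ (Fin d) → EuclideanSpace ℝ (Fin d)) (q q' : ℝ),
      (∀ x y, dist (s x) (s y) = q * dist x y) →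
      (∀ x y, dist (s x) (s y) = q' * dist x y) → q = q' := by
    intro s q q' h1 h2
    have := (h1 x₀ y₀).symm.trans (h2 x₀ y₀)
    exact mul_right_cancel₀ hdxy.ne' this
  -- ratio of elements of Fix is 1
  have hfix : ∀ s ∈ simParadesFix F0 F1,
      ∀ q : ℝ, 0 < q → (∀ x y, dist (s x) (s y) = q * dist x y) → q = 1 := by
    rintro s ⟨-, hcase⟩ q hq hqd
    rcases hcase with h | h
    · have := sim_diam_real hq hqd F0
      rw [h] at this
      have : q * a = a := this.symm
      nlinarith
    · have := sim_diam_real hq hqd F1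
      rw [h] at this
      have : q * b = b := this.symm
      nlinarith
  -- ratio of elements of Up is r
  have hup : ∀ s ∈ simParadesUp F1 γ, ∀ x y, dist (s x) (s y) = r * dist x y := by
    rintro _ ⟨η, hη, rfl⟩ x y
    simp only [Function.comp_apply, η.dist_eq]
    exact hγd x y
  -- ratio of elements of Down is r⁻¹
  have hdown : ∀ s ∈ simParadesDown F0 γ, ∀ x y, dist (s x) (s y) = r⁻¹ * dist x y := by
    rintro _ ⟨η, hη, rfl⟩ x y
    simp only [Function.comp_apply, η.dist_eq]
    have h := hγd (γ.symm x) (γ.symm y)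
    simp only [Equiv.apply_symm_apply] at h
    field_simp
    linarith
  have hγsymm : ⇑γ.symm '' F1 = F0 := by
    rw [← hγ, Equiv.symm_image_image]
  refine ⟨?_, ?_, ?_, ?_, ?_⟩
  · -- union
    apply Set.Subset.antisymm
    · rintro s hs
      obtain ⟨⟨hbij, q, hq, hqd⟩, hcase⟩ := hs
      have hmem : s ∈ simParades F0 F1 := ⟨⟨hbij, q, hq, hqd⟩, hcase⟩
      simp only [Set.mem_insert_iff, Set.mem_singleton_iff] at hcase
      rcases hcase with (h | h) | (h | h)
      · exact Or.inl (Or.inl ⟨hmem, Or.inl h⟩)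
      · -- s '' F0 = F1 : s ∈ Up
        refine Or.inl (Or.inr ?_)
        have hqr : q = r := by
          have hs0 := sim_diam_real hq hqd F0
          rw [h] at hs0
          have : q * a = b := hs0.symm
          nlinarith
        refine ⟨⟨γ.symm.trans (Equiv.ofBijective s hbij),
          Isometry.of_dist_eq fun x y => ?_⟩, ?_, ?_⟩
        · show dist (s (γ.symm x)) (s (γ.symm y)) = dist x y
          rw [hqd, hqr]
          have := hγd (γ.symm x) (γ.symm y)
          simp only [Equiv.apply_symm_apply] at this
          linarith
        · show (γ.symm.trans (Equiv.ofBijective s hbij)) '' F1 = F1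
          have : ⇑(γ.symm.trans (Equiv.ofBijective s hbij)) = s ∘ ⇑γ.symm := rfl
          rw [this, Set.image_comp, hγsymm, h]
        · funext x
          exact congrArg s (γ.symm_apply_apply x).symm
      · -- s '' F1 = F0 : s ∈ Down
        refine Or.inr ?_
        have hqr : q * r = 1 := by
          have hs1 := sim_diam_real hq hqd F1
          rw [h] at hs1
          have hqb : q * b = a := hs1.symm
          have : q * (r * a) = a := by rw [hrab]; exact hqb
          nlinarith
        refine ⟨⟨γ.trans (Equiv.ofBijective s hbij),
          Isometry.of_dist_eq fun x y => ?_⟩, ?_, ?_⟩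
        · show dist (s (γ x)) (s (γ y)) = dist x y
          rw [hqd, hγd]
          nlinarith [@dist_nonneg _ _ x y]
        · show (γ.trans (Equiv.ofBijective s hbij)) '' F0 = F0
          have : ⇑(γ.trans (Equiv.ofBijective s hbij)) = s ∘ ⇑γ := rfl
          rw [this, Set.image_comp, hγ, h]
        · funext x
          exact congrArg s (γ.apply_symm_apply x).symm
      · exact Or.inl (Or.inl ⟨hmem, Or.inr h⟩)
    · rintro s ((hs | hs) | hs)
      · exact hs.1
      · obtain ⟨η, hη, rfl⟩ := hs
        refine ⟨⟨(η.toEquiv.bijective).comp γ.bijective, r, hr, hup _ ⟨η, hη, rfl⟩⟩, ?_⟩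
        left
        have : (⇑η ∘ ⇑γ) '' F0 = F1 := by rw [Set.image_comp, hγ, hη]
        rw [this]
        simp
      · obtain ⟨η, hη, rfl⟩ := hs
        refine ⟨⟨(η.toEquiv.bijective).comp γ.symm.bijective, r⁻¹, by positivity,
          hdown _ ⟨η, hη, rfl⟩⟩, ?_⟩
        right
        have : (⇑η ∘ ⇑γ.symm) '' F1 = F0 := by rw [Set.image_comp, hγsymm, hη]
        rw [this]
        simp
  · -- Fix ⊓ Up
    rw [Set.disjoint_left]
    rintro s hsF hsU
    have h1 : r = 1 := hfix s hsF r hr (hup s hsU)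
    exact hr1 h1
  · -- Fix ⊓ Down
    rw [Set.disjoint_left]
    rintro s hsF hsD
    have h1 : r⁻¹ = 1 := hfix s hsF r⁻¹ (by positivity) (hdown s hsD)
    apply hr1
    field_simp at h1
    exact h1.symm
  · -- Up ⊓ Down
    rw [Set.disjoint_left]
    rintro s hsU hsD
    have h1 : r = r⁻¹ := huniq s r r⁻¹ (hup s hsU) (hdown s hsD)
    apply hr1
    have : r * r = 1 := by field_simp at h1; nlinarith
    nlinarith
  · -- elements of Fix are isometries
    intro s hs
    obtain ⟨hbij, q, hq, hqd⟩ := hs.1.1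
    have h1 : q = 1 := hfix s hs q hq hqd
    exact Isometry.of_dist_eq fun x y => by rw [hqd, h1, one_mul]
end
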